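/- For symmetric real matrices X and Y of the same size and any positive integer k, tr((XYX)^(2^k)) ≤ tr(X^(2^k) · Y^(2^k) · X^(2^k)). -/
import Mathlib

open Matrix

variable {n : ℕ}

private lemma trace_mul_self_transpose_nonneg (W : Matrix (Fin n) (Fin n) ℝ) :
    0 ≤ Matrix.trace (W * Wᵀ) := by
  rw [Matrix.trace]
  refine Finset.sum_nonneg fun i _ => ?_
  rw [Matrix.diag_apply, Matrix.mul_apply]
  exact Finset.sum_nonneg fun j _ => by
    simp only [Matrix.transpose_apply]; exact mul_self_nonneg _

private lemma cs0 (A B : Matrix (Fin n) (Fin n) ℝ) :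
    (Matrix.trace (A * B)) ^ 2 ≤ Matrix.trace (A * Aᵀ) * Matrix.trace (B * Bᵀ) := by
  have hAB : Matrix.trace (A * B) = ∑ p : Fin n × Fin n, A p.1 p.2 * B p.2 p.1 := by
    rw [Matrix.trace, Fintype.sum_prod_type]
    simp [Matrix.diag_apply, Matrix.mul_apply]
  have hA : Matrix.trace (A * Aᵀ) = ∑ p : Fin n × Fin n, (A p.1 p.2) ^ 2 := by
    rw [Matrix.trace, Fintype.sum_prod_type]
    simp [Matrix.diag_apply, Matrix.mul_apply, sq]
  have hB : Matrix.trace (B * Bᵀ) = ∑ p : Fin n × Fin n, (B p.2 p.1) ^ 2 := by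
    rw [Matrix.trace, Fintype.sum_prod_type_right]
    simp [Matrix.diag_apply, Matrix.mul_apply, sq]
  rw [hAB, hA, hB]
  exact Finset.sum_mul_sq_le_sq_mul_sq _ _ _

private lemma mul_pow_eq (U V : Matrix (Fin n) (Fin n) ℝ) (m : ℕ) :
    (U * V) ^ (m + 1) = U * (V * U) ^ m * V := by
  induction m with
  | zero => simp
  | succ m ih =>
    rw [pow_succ, ih, pow_succ]
    simp only [mul_assoc]

private lemma trace_pow_mul_comm (U V : Matrix (Fin n) (Fin n) ℝ) (m : ℕ) :
    Matrix.trace ((U * V) ^ m) = Matrix.trace ((V * U) ^ m) := by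
  cases m with
  | zero => simp
  | succ m =>
    rw [mul_pow_eq, Matrix.trace_mul_comm, ← mul_assoc, ← pow_succ']

private lemma pow_two_succ (M : Matrix (Fin n) (Fin n) ℝ) (j : ℕ) :
    M ^ 2 ^ (j + 1) = (M * M) ^ 2 ^ j := by
  rw [← sq, ← pow_mul, pow_succ, Nat.mul_comm]

private lemma trace_pow_mul_self_transpose_nonneg (j : ℕ) (W : Matrix (Fin n) (Fin n) ℝ) :
    0 ≤ Matrix.trace ((W * Wᵀ) ^ 2 ^ j) := by
  cases j with
  | zero => simpa using trace_mul_self_transpose_nonneg W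
  | succ j =>
    have ht : ((W * Wᵀ) ^ 2 ^ j)ᵀ = (W * Wᵀ) ^ 2 ^ j := by
      rw [Matrix.transpose_pow, Matrix.transpose_mul, Matrix.transpose_transpose]
    have h : (W * Wᵀ) ^ 2 ^ (j + 1) = ((W * Wᵀ) ^ 2 ^ j) * ((W * Wᵀ) ^ 2 ^ j)ᵀ := by
      rw [ht, ← pow_add, pow_succ, Nat.mul_two]
    rw [h]
    exact trace_mul_self_transpose_nonneg _

private lemma Rlem (j : ℕ) (A B : Matrix (Fin n) (Fin n) ℝ) :
    (Matrix.trace ((A * B) ^ 2 ^ j)) ^ 2 ≤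
      Matrix.trace ((A * Aᵀ) ^ 2 ^ j) * Matrix.trace ((B * Bᵀ) ^ 2 ^ j) := by
  induction j generalizing A B with
  | zero => simpa using cs0 A B
  | succ j ih =>
    have h2 := ih (A * B) (A * B)
    rw [← pow_two_succ] at h2
    -- rewrite (A*B)*(A*B)ᵀ as (B*Bᵀ)*(Aᵀ*A) inside the trace
    have hz : Matrix.trace ((A * B * (A * B)ᵀ) ^ 2 ^ j)
        = Matrix.trace ((B * Bᵀ * (Aᵀ * A)) ^ 2 ^ j) := by
      have e1 : A * B * (A * B)ᵀ = A * (B * Bᵀ * Aᵀ) := by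
        rw [Matrix.transpose_mul]; simp only [mul_assoc]
      rw [e1, trace_pow_mul_comm]
      congr 1
      simp only [mul_assoc]
    have h3 := ih (B * Bᵀ) (Aᵀ * A)
    have e2 : (B * Bᵀ)ᵀ = B * Bᵀ := by
      rw [Matrix.transpose_mul, Matrix.transpose_transpose]
    have e3 : (Aᵀ * A)ᵀ = Aᵀ * A := by
      rw [Matrix.transpose_mul, Matrix.transpose_transpose]
    rw [e2, e3, ← pow_two_succ, ← pow_two_succ] at h3
    have e4 : Matrix.trace ((Aᵀ * A) ^ 2 ^ (j + 1))
        = Matrix.trace ((A * Aᵀ) ^ 2 ^ (j + 1)) := trace_pow_mul_comm _ _ _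
    rw [e4] at h3
    rw [hz] at h2
    calc (Matrix.trace ((A * B) ^ 2 ^ (j + 1))) ^ 2
        ≤ Matrix.trace ((B * Bᵀ * (Aᵀ * A)) ^ 2 ^ j) *
            Matrix.trace ((B * Bᵀ * (Aᵀ * A)) ^ 2 ^ j) := h2
      _ = (Matrix.trace ((B * Bᵀ * (Aᵀ * A)) ^ 2 ^ j)) ^ 2 := (sq _).symm
      _ ≤ Matrix.trace ((B * Bᵀ) ^ 2 ^ (j + 1)) * Matrix.trace ((A * Aᵀ) ^ 2 ^ (j + 1)) := h3
      _ = _ := mul_comm _ _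

private lemma Llem (j : ℕ) (M : Matrix (Fin n) (Fin n) ℝ) :
    Matrix.trace (M ^ 2 ^ (j + 1)) ≤ Matrix.trace ((M * Mᵀ) ^ 2 ^ j) := by
  have h := Rlem j M M
  rw [← pow_two_succ] at h
  have hz := trace_pow_mul_self_transpose_nonneg j M
  nlinarith [h, hz]

private lemma isSymm_sq {X : Matrix (Fin n) (Fin n) ℝ} (hX : X.IsSymm) : (X ^ 2).IsSymm := by
  unfold Matrix.IsSymm at *
  rw [Matrix.transpose_pow, hX]

private lemma trace_sandwich (X Y : Matrix (Fin n) (Fin n) ℝ) (m : ℕ) :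
    Matrix.trace ((X * Y * X) ^ m) = Matrix.trace ((X ^ 2 * Y) ^ m) := by
  rw [trace_pow_mul_comm (X * Y) X m]
  congr 2
  rw [← mul_assoc, ← sq]

private lemma sq_mul_transpose (X Y : Matrix (Fin n) (Fin n) ℝ)
    (hX : X.IsSymm) (hY : Y.IsSymm) :
    X ^ 2 * Y * (X ^ 2 * Y)ᵀ = X ^ 2 * Y ^ 2 * X ^ 2 := by
  have ht : (X ^ 2 * Y)ᵀ = Y * X ^ 2 := by
    rw [Matrix.transpose_mul, Matrix.transpose_pow, hX, hY]
  rw [ht]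
  noncomm_ring

set_option maxHeartbeats 1000000 in
private lemma main_aux : ∀ (k : ℕ) (X Y : Matrix (Fin n) (Fin n) ℝ),
    X.IsSymm → Y.IsSymm →
    Matrix.trace ((X * Y * X) ^ 2 ^ (k + 1)) ≤
      Matrix.trace (X ^ 2 ^ (k + 1) * Y ^ 2 ^ (k + 1) * X ^ 2 ^ (k + 1)) := by
  intro k
  induction k with
  | zero =>
    intro X Y hX hY
    have h := Llem 0 (X ^ 2 * Y)
    rw [sq_mul_transpose X Y hX hY] at h
    rw [trace_sandwich]
    norm_num at h ⊢
    exact h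
  | succ k ih =>
    intro X Y hX hY
    have h1 := Llem (k + 1) (X ^ 2 * Y)
    rw [sq_mul_transpose X Y hX hY] at h1
    have h2 := ih (X ^ 2) (Y ^ 2) (isSymm_sq hX) (isSymm_sq hY)
    have hp : ∀ Z : Matrix (Fin n) (Fin n) ℝ, (Z ^ 2) ^ 2 ^ (k + 1) = Z ^ 2 ^ (k + 2) := by
      intro Z
      rw [← pow_mul]
      congr 1
      rw [pow_succ 2 (k + 1), Nat.mul_comm]
    rw [hp X, hp Y] at h2
    rw [trace_sandwich]
    exact le_trans h1 h2

theorem trace_symmetric_rearrangement {n : ℕ} (X Y : Matrix (Fin n) (Fin n) ℝ)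
    (hX : X.IsSymm) (hY : Y.IsSymm) (k : ℕ) (hk : 0 < k) :
    Matrix.trace ((X * Y * X) ^ (2 ^ k)) ≤
      Matrix.trace (X ^ (2 ^ k) * Y ^ (2 ^ k) * X ^ (2 ^ k)) := by
  obtain ⟨k', rfl⟩ : ∃ k', k = k' + 1 := ⟨k - 1, (Nat.succ_pred_eq_of_pos hk).symm⟩
  exact main_aux k' X Y hX hY
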